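/- arXiv:2302.07019 — 2 statements merged into one kernel-verified Lean document; each statement's English description precedes it below -/
import Mathlib

section
/- Let d ≥ 1 and p ≥ 1 be integers, ε > 0, and define g : ℝ^d → ℝ by g(x) = ∏_{i=1}^d x_i^p. Then, with all integrals taken over the cube (0,ε)^d, (∫ ‖∇g(x)‖² dx) / (∫ g(x) dx) = d·p²·(p+1)^d / ((2p−1)·(2p+1)^(d−1)) · ε^(pd−2), where ‖∇g‖² = Σ_{i=1}^d (∂g/∂x_i)². Consequently the quotient of second-order stiffness to row-sum lumped mass of a corner-cut basis function diverges as ε → 0⁺ if and only if p·d < 2, i.e. precisely for d = 1 and p = 1. -/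
open MeasureTheory Set

/-! The function `∏ i, x i ^ p` and each of its squared partial derivatives
`p² x_i^(2p-2) ∏_{j ≠ i} x_j^(2p)` are tensor products of monomials, so by Fubini their integrals
over the cube `(0,ε)^d` factor into the one-dimensional moments `∫₀^ε tⁿ = εⁿ⁺¹/(n+1)`. The
stiffness is `d p² ε^(2p-1)/(2p-1) · (ε^(2p+1)/(2p+1))^(d-1)`, the lumped mass is
`(ε^(p+1)/(p+1))^d`, and the powers of `ε` in the quotient combine to `ε^(pd-2)`. -/

section CubeIntegrals

variable {ι : Type*} [Fintype ι]

theorem setIntegral_univ_pi_prod {𝕜 : Type*} [RCLike 𝕜] {E : ι → Type*}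
    {mE : ∀ i, MeasurableSpace (E i)} {μ : (i : ι) → Measure (E i)} [∀ i, SigmaFinite (μ i)]
    (s : (i : ι) → Set (E i)) (f : (i : ι) → E i → 𝕜) :
    ∫ x in univ.pi s, ∏ i, f i (x i) ∂(Measure.pi μ) = ∏ i, ∫ t in s i, f i t ∂(μ i) := by
  rw [Measure.restrict_pi_pi, integral_fintype_prod_eq_prod]

theorem integral_Ioo_zero_pow {ε : ℝ} (hε : 0 ≤ ε) (n : ℕ) :
    ∫ t in Ioo 0 ε, t ^ n = ε ^ (n + 1) / (n + 1) := by
  rw [← integral_Ioc_eq_integral_Ioo, ← intervalIntegral.integral_of_le hε, integral_pow]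
  simp

theorem setIntegral_cube_prod_pow {ε : ℝ} (hε : 0 ≤ ε) (n : ι → ℕ) :
    ∫ x in univ.pi fun _ : ι => Ioo 0 ε, ∏ i, x i ^ n i = ∏ i, ε ^ (n i + 1) / (n i + 1) := by
  rw [volume_pi, setIntegral_univ_pi_prod _ fun i t => t ^ n i]
  simp only [integral_Ioo_zero_pow hε]

theorem Continuous.integrableOn_univ_pi_Ioo {f : (ι → ℝ) → ℝ} (hf : Continuous f) (a b : ℝ) :
    IntegrableOn f (univ.pi fun _ : ι => Ioo a b) :=
  (hf.continuousOn.integrableOn_compact (isCompact_univ_pi fun _ => isCompact_Icc)).mono_set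
    (pi_mono fun _ _ => Ioo_subset_Icc_self)

end CubeIntegrals

section PartialDerivatives

variable {ι : Type*} [Fintype ι] [DecidableEq ι]

theorem Finset.prod_update_const {α M : Type*} [CommMonoid M] (f : ι → α → M) (i : ι) (a b : α) :
    ∏ j, f j (Function.update (fun _ => b) i a j) = f i a * ∏ j ∈ univ.erase i, f j b := by
  rw [← mul_prod_erase univ _ (mem_univ i), Function.update_self]
  congr 1
  exact prod_congr rfl fun j hj => by rw [Function.update_of_ne (ne_of_mem_erase hj)]

theorem fderiv_prod_pow_apply_single (p : ℕ) (x : ι → ℝ) (i : ι) :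
    fderiv ℝ (fun x : ι → ℝ => ∏ j, x j ^ p) x (Pi.single i 1) =
      p * ∏ j, x j ^ Function.update (fun _ => p) i (p - 1) j := by
  have hpow : ∀ j, HasFDerivAt (fun x : ι → ℝ => x j ^ p)
      ((p * x j ^ (p - 1)) • ContinuousLinearMap.proj j) x := fun j =>
    (hasDerivAt_pow p (x j)).comp_hasFDerivAt x
      (ContinuousLinearMap.proj j : (ι → ℝ) →L[ℝ] ℝ).hasFDerivAt
  rw [(HasFDerivAt.finsetProd fun j _ => hpow j).fderiv, Finset.prod_update_const]
  simp only [sum_apply, smul_apply, ContinuousLinearMap.proj_apply, Pi.single_apply,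
    smul_eq_mul, mul_ite, mul_one, mul_zero, Finset.sum_ite_eq', Finset.mem_univ, ↓reduceIte]
  ring

theorem continuous_fderiv_prod_pow_apply_single (p : ℕ) (i : ι) :
    Continuous fun x => fderiv ℝ (fun x : ι → ℝ => ∏ j, x j ^ p) x (Pi.single i 1) := by
  simp_rw [fderiv_prod_pow_apply_single]
  fun_prop

theorem setIntegral_cube_sq_fderiv_prod_pow_apply_single {ε : ℝ} (hε : 0 ≤ ε) {p : ℕ}
    (hp : 1 ≤ p) (i : ι) :
    ∫ x in univ.pi fun _ : ι => Ioo 0 ε,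
        (fderiv ℝ (fun x : ι → ℝ => ∏ j, x j ^ p) x (Pi.single i 1)) ^ 2 =
      p ^ 2 * (ε ^ (2 * p - 1) / (2 * p - 1)) *
        (ε ^ (2 * p + 1) / (2 * p + 1)) ^ (Fintype.card ι - 1) := by
  have hexp : (p - 1) * 2 + 1 = 2 * p - 1 := by omega
  simp_rw [fderiv_prod_pow_apply_single, mul_pow, ← Finset.prod_pow, ← pow_mul]
  rw [integral_const_mul, setIntegral_cube_prod_pow hε,
    Finset.prod_update_const (fun _ k => ε ^ (k * 2 + 1) / ((k * 2 : ℕ) + 1 : ℝ)),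
    Finset.prod_const, Finset.card_erase_of_mem (Finset.mem_univ i), Finset.card_univ, hexp,
    mul_comm p 2]
  push_cast [Nat.cast_sub hp]
  ring

end PartialDerivatives

theorem pow_mul_pow_div_pow_eq_zpow {ε : ℝ} (hε : ε ≠ 0) {p d : ℕ} (hp : 1 ≤ p) (hd : 1 ≤ d) :
    ε ^ (2 * p - 1) * (ε ^ (2 * p + 1)) ^ (d - 1) / (ε ^ (p + 1)) ^ d = ε ^ ((p : ℤ) * d - 2) := by
  rw [← pow_mul, ← pow_mul, ← pow_add, ← zpow_natCast, ← zpow_natCast, ← zpow_sub₀ hε]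
  congr 1
  push_cast [Nat.cast_sub hp, Nat.cast_sub hd, Nat.cast_sub (by omega : 1 ≤ 2 * p)]
  ring

/-- For `g x = ∏ i, (x i)^p` on the cube `(0,ε)^d` (`d,p ≥ 1`, `ε > 0`),
`(∫ ‖∇g‖² dx)/(∫ g dx) = d·p²·(p+1)^d / ((2p−1)·(2p+1)^(d−1)) · ε^(pd−2)`. -/
theorem corner_cut_rayleigh_lumped_mass
    (d p : ℕ) (hd : 1 ≤ d) (hp : 1 ≤ p) (ε : ℝ) (hε : 0 < ε)
    (g : (Fin d → ℝ) → ℝ) (hg : g = fun x => ∏ i, (x i) ^ p) :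
    (∫ x in Set.univ.pi fun _ : Fin d => Set.Ioo (0:ℝ) ε,
        ∑ i, (fderiv ℝ g x (Pi.single i 1)) ^ 2) /
      (∫ x in Set.univ.pi fun _ : Fin d => Set.Ioo (0:ℝ) ε, g x)
      = (d : ℝ) * (p : ℝ) ^ 2 * ((p : ℝ) + 1) ^ d /
          ((2 * (p : ℝ) - 1) * (2 * (p : ℝ) + 1) ^ (d - 1)) *
          ε ^ ((p : ℤ) * (d : ℤ) - 2) := by
  subst hg
  rw [integral_finsetSum _ fun i _ =>
      ((continuous_fderiv_prod_pow_apply_single p i).fun_pow 2).integrableOn_univ_pi_Ioo 0 ε,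
    setIntegral_cube_prod_pow hε.le fun _ => p]
  simp only [setIntegral_cube_sq_fderiv_prod_pow_apply_single hε.le hp, Finset.sum_const,
    Finset.prod_const, Finset.card_univ, Fintype.card_fin, nsmul_eq_mul]
  rw [← pow_mul_pow_div_pow_eq_zpow hε.ne' hp hd]
  simp only [div_pow]
  field_simp
end

section
/- Let p ≥ 1 be a natural number, γ_K > 0, and J ≠ 0 real numbers. Define for ε ∈ (0,1] the quotient q(ε) = (∫₀^ε p²·x^(2p−2) dx + γ_K·J²) / (∫₀^ε x^p dx). Then ε^(p+1)·q(ε) → γ_K·J²·(p+1) as ε → 0⁺; in particular q(ε) → +∞ as ε → 0⁺. Hence adding a ghost-penalty term to the stiffness matrix while using a row-sum lumped mass matrix without ghost mass produces a generalized Rayleigh quotient that diverges like ε^(−(p+1)) as the cut size ε tends to zero. -/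
open MeasureTheory Filter Set Topology

/-! The lumped mass `∫₀^ε x^p = ε^(p+1)/(p+1)` vanishes like `ε^(p+1)`, while the stiffness
tends to the ghost-penalty term `γ_K J² > 0`, since the integral of the continuous stiffness
density over `(0, ε)` tends to zero. -/

theorem integral_pow_from_zero (n : ℕ) (ε : ℝ) :
    ∫ x in (0:ℝ)..ε, x ^ n = ε ^ (n + 1) / (n + 1) := by
  simp [integral_pow]

theorem tendsto_integral_from_zero_nhds_zero {f : ℝ → ℝ} (hf : Continuous f) :
    Tendsto (fun ε => ∫ x in (0:ℝ)..ε, f x) (𝓝 0) (𝓝 0) := by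
  simpa using
    (intervalIntegral.continuous_primitive (fun a b => hf.intervalIntegrable a b) 0).tendsto 0

theorem tendsto_integral_pow_nhdsGT_zero (n : ℕ) :
    Tendsto (fun ε => ∫ x in (0:ℝ)..ε, x ^ n) (𝓝[>] 0) (𝓝[>] 0) := by
  refine tendsto_nhdsWithin_iff.mpr ⟨?_, ?_⟩
  · exact (tendsto_integral_from_zero_nhds_zero (continuous_pow n)).mono_left nhdsWithin_le_nhds
  · filter_upwards [self_mem_nhdsWithin] with ε (hε : 0 < ε)
    rw [mem_Ioi, integral_pow_from_zero]
    positivity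

theorem Filter.Tendsto.div_nhdsGT_zero_atTop {α : Type*} {l : Filter α} {f g : α → ℝ}
    {c : ℝ} (hc : 0 < c) (hf : Tendsto f l (𝓝 c)) (hg : Tendsto g l (𝓝[>] 0)) :
    Tendsto (fun a => f a / g a) l atTop :=
  hf.pos_mul_atTop hc hg.inv_tendsto_nhdsGT_zero

theorem tendsto_pow_mul_div_integral_pow {N : ℝ → ℝ} {c : ℝ} (n : ℕ)
    (hN : Tendsto N (𝓝[>] 0) (𝓝 c)) :
    Tendsto (fun ε => ε ^ (n + 1) * (N ε / ∫ x in (0:ℝ)..ε, x ^ n)) (𝓝[>] 0)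
      (𝓝 (c * ((n : ℝ) + 1))) := by
  refine (hN.mul_const ((n : ℝ) + 1)).congr' ?_
  filter_upwards [self_mem_nhdsWithin] with ε (hε : 0 < ε)
  rw [integral_pow_from_zero]
  field_simp

theorem ghost_stiffness_lumped_mass_diverges_general
    (p : ℕ) (γK J : ℝ) (hγK : 0 < γK) (hJ : J ≠ 0) :
    Tendsto (fun ε =>
        ε ^ (p + 1) *
          (((∫ x in (0:ℝ)..ε, (p : ℝ) ^ 2 * x ^ (2 * p - 2)) + γK * J ^ 2) /
            (∫ x in (0:ℝ)..ε, x ^ p)))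
      (𝓝[>] (0:ℝ)) (𝓝 (γK * J ^ 2 * ((p : ℝ) + 1))) ∧
    Tendsto (fun ε =>
        ((∫ x in (0:ℝ)..ε, (p : ℝ) ^ 2 * x ^ (2 * p - 2)) + γK * J ^ 2) /
          (∫ x in (0:ℝ)..ε, x ^ p))
      (𝓝[>] (0:ℝ)) atTop := by
  have hstiffness : Tendsto
      (fun ε => (∫ x in (0:ℝ)..ε, (p : ℝ) ^ 2 * x ^ (2 * p - 2)) + γK * J ^ 2) (𝓝[>] 0)
      (𝓝 (γK * J ^ 2)) := by
    simpa only [zero_add] using ((tendsto_integral_from_zero_nhds_zero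
      (f := fun x => (p : ℝ) ^ 2 * x ^ (2 * p - 2)) (by fun_prop)).add_const
      (γK * J ^ 2)).mono_left nhdsWithin_le_nhds
  exact ⟨tendsto_pow_mul_div_integral_pow p hstiffness,
    hstiffness.div_nhdsGT_zero_atTop (by positivity) (tendsto_integral_pow_nhdsGT_zero p)⟩

/-- With ghost stiffness `γ_K > 0`, jump `J ≠ 0`, and lumped mass without
ghost mass, the quotient `q(ε) = (∫₀^ε p²·x^(2p−2) dx + γ_K·J²)/(∫₀^ε x^p dx)` satisfies
`ε^(p+1)·q(ε) → γ_K·J²·(p+1)` as `ε → 0⁺`; in particular `q(ε) → +∞`. -/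
theorem ghost_stiffness_lumped_mass_diverges
    (p : ℕ) (hp : 1 ≤ p) (γK J : ℝ) (hγK : 0 < γK) (hJ : J ≠ 0) :
    Tendsto (fun ε =>
        ε ^ (p + 1) *
          (((∫ x in (0:ℝ)..ε, (p : ℝ) ^ 2 * x ^ (2 * p - 2)) + γK * J ^ 2) /
            (∫ x in (0:ℝ)..ε, x ^ p)))
      (𝓝[>] (0:ℝ)) (𝓝 (γK * J ^ 2 * ((p : ℝ) + 1))) ∧
    Tendsto (fun ε =>
        ((∫ x in (0:ℝ)..ε, (p : ℝ) ^ 2 * x ^ (2 * p - 2)) + γK * J ^ 2) /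
          (∫ x in (0:ℝ)..ε, x ^ p))
      (𝓝[>] (0:ℝ)) atTop :=
  ghost_stiffness_lumped_mass_diverges_general p γK J hγK hJ
end
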